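/- arXiv:math/0504241 — 2 statements merged into one kernel-verified Lean document; each statement's English description precedes it below -/
import Mathlib

section
/- Let G be a topological group acting continuously by isometries on a CAT(0) space X, let Q ⊆ G be a compact subset, and let x₀ ∈ X. Then there exists no unbounded Q-evanescent subset of X if and only if there exist λ > 0 and d₀ ≥ 0 such that sup_{g ∈ Q} d(g·x, x) ≥ λ·d(x, x₀) − d₀ for all x ∈ X. -/
/-
The displacement `f x = sup_{g ∈ Q} d(g x, x)` is finite (by compactness of `Q`) and midpoint
convex, because in a CAT(0) space the distance between the midpoints of two segments is at most
the average of the distances between their endpoints. If the sublevel set `{f ≤ f x₀ + 1}` lies in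
the ball `B(x₀, r)`, convexity on the segment `[x₀, x]`, evaluated at a dyadic point at distance
between `r` and `2r` from `x₀`, forces `f x ≥ d(x, x₀) / 2r`. Conversely, linear growth confines
every sublevel set of `f`, hence every `Q`-evanescent set, to a ball.
-/

/-- A map `σ : ℝ → X` is a geodesic (isometric) on the interval `[a, b]`. -/
def IsGeodesicOn {X : Type*} [MetricSpace X] (σ : ℝ → X) (a b : ℝ) : Prop :=
  ∀ s ∈ Set.Icc a b, ∀ t ∈ Set.Icc a b, dist (σ s) (σ t) = |s - t|

/-- A geodesic metric space: any two points are joined by a geodesic segment. -/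
def IsGeodesicSpace (X : Type*) [MetricSpace X] : Prop :=
  ∀ x y : X, ∃ σ : ℝ → X, IsGeodesicOn σ 0 (dist x y) ∧ σ 0 = x ∧ σ (dist x y) = y

/-- A CAT(0) space: a geodesic space satisfying the CN inequality of Bruhat–Tits
for all (metric) midpoints. -/
def IsCAT0 (X : Type*) [MetricSpace X] : Prop :=
  IsGeodesicSpace X ∧
    ∀ x c c' m : X, dist m c = dist c c' / 2 → dist m c' = dist c c' / 2 →
      2 * dist m x ^ 2 ≤ dist c' x ^ 2 + dist c x ^ 2 - dist c' c ^ 2 / 2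

/-- A subset of a metric space is (geodesically) convex if it contains every geodesic
segment joining any two of its points. -/
def GConvex {X : Type*} [MetricSpace X] (A : Set X) : Prop :=
  ∀ (σ : ℝ → X) (a b : ℝ), a ≤ b → IsGeodesicOn σ a b → σ a ∈ A → σ b ∈ A →
    ∀ t ∈ Set.Icc a b, σ t ∈ A

/-- `ρ` is an action of the group `G` on `X` by isometries. -/
def IsIsometricAction {G X : Type*} [Group G] [MetricSpace X] (ρ : G → X → X) : Prop :=
  (∀ x, ρ 1 x = x) ∧ (∀ g h x, ρ (g * h) x = ρ g (ρ h x)) ∧ ∀ g : G, Isometry (ρ g)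

/-- A subset `T ⊆ X` is `Q`-evanescent: the set of displacements `d(g x, x)`,
`g ∈ Q`, `x ∈ T`, is bounded. -/
def QEvanescent {G X : Type*} [MetricSpace X] (ρ : G → X → X) (Q : Set G) (T : Set X) : Prop :=
  ∃ C : ℝ, ∀ g ∈ Q, ∀ x ∈ T, dist (ρ g x) x ≤ C

/-- The action is evanescent: there is an unbounded set which is `Q`-evanescent
for every compact `Q ⊆ G`. -/
def Evanescent {G X : Type*} [TopologicalSpace G] [MetricSpace X] (ρ : G → X → X) : Prop :=
  ∃ T : Set X, ¬ Bornology.IsBounded T ∧ ∀ Q : Set G, IsCompact Q → QEvanescent ρ Q T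

/-- The action is weakly evanescent: for every compact `Q ⊆ G` there is an unbounded
`Q`-evanescent set. -/
def WeaklyEvanescent {G X : Type*} [TopologicalSpace G] [MetricSpace X] (ρ : G → X → X) : Prop :=
  ∀ Q : Set G, IsCompact Q → ∃ T : Set X, ¬ Bornology.IsBounded T ∧ QEvanescent ρ Q T

open Metric Set

section

variable {X : Type*} [MetricSpace X]

def MetricMidpointConvex (f : X → ℝ) : Prop :=
  ∀ x y m : X, dist m x = dist x y / 2 → dist m y = dist x y / 2 → f m ≤ (f x + f y) / 2

namespace IsGeodesicOn

variable {σ : ℝ → X} {a b s t : ℝ}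

lemma dist_midpoint_left (hσ : IsGeodesicOn σ a b) (hs : s ∈ Icc a b) (ht : t ∈ Icc a b) :
    dist (σ ((s + t) / 2)) (σ s) = dist (σ s) (σ t) / 2 := by
  have hm : (s + t) / 2 ∈ Icc a b := ⟨by linarith [hs.1, ht.1], by linarith [hs.2, ht.2]⟩
  rw [hσ _ hm _ hs, hσ _ hs _ ht, show (s + t) / 2 - s = (s - t) / -2 by ring, abs_div]
  norm_num

lemma dist_midpoint_right (hσ : IsGeodesicOn σ a b) (hs : s ∈ Icc a b) (ht : t ∈ Icc a b) :
    dist (σ ((s + t) / 2)) (σ t) = dist (σ s) (σ t) / 2 := by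
  have hm : (s + t) / 2 ∈ Icc a b := ⟨by linarith [hs.1, ht.1], by linarith [hs.2, ht.2]⟩
  rw [hσ _ hm _ ht, hσ _ hs _ ht, show (s + t) / 2 - t = (s - t) / 2 by ring, abs_div]
  norm_num

end IsGeodesicOn

lemma IsGeodesicSpace.exists_midpoint (hX : IsGeodesicSpace X) (x y : X) :
    ∃ m : X, dist m x = dist x y / 2 ∧ dist m y = dist x y / 2 := by
  obtain ⟨σ, hσ, h0, h1⟩ := hX x y
  have h0mem : (0 : ℝ) ∈ Icc 0 (dist x y) := ⟨le_rfl, dist_nonneg⟩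
  have h1mem : dist x y ∈ Icc 0 (dist x y) := ⟨dist_nonneg, le_rfl⟩
  refine ⟨σ ((0 + dist x y) / 2), ?_, ?_⟩
  · simpa [h0, h1] using hσ.dist_midpoint_left h0mem h1mem
  · simpa [h0, h1] using hσ.dist_midpoint_right h0mem h1mem

namespace IsCAT0

lemma dist_midpoint_midpoint_le_of_left_eq (hX : IsCAT0 X) {p q q' m m' : X}
    (hmp : dist m p = dist p q / 2) (hmq : dist m q = dist p q / 2)
    (hm'p : dist m' p = dist p q' / 2) (hm'q' : dist m' q' = dist p q' / 2) :
    dist m m' ≤ dist q q' / 2 := by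
  have A := hX.2 m' p q m hmp hmq
  have B := hX.2 q p q' m' hm'p hm'q'
  rw [dist_comm q p, dist_comm q m', dist_comm p m', hm'p] at A
  rw [dist_comm q' q, dist_comm q' p] at B
  nlinarith [dist_nonneg (x := m) (y := m'), dist_nonneg (x := q) (y := q')]

lemma dist_midpoint_midpoint_le (hX : IsCAT0 X) {p q p' q' m m' : X}
    (hmp : dist m p = dist p q / 2) (hmq : dist m q = dist p q / 2)
    (hm'p' : dist m' p' = dist p' q' / 2) (hm'q' : dist m' q' = dist p' q' / 2) :
    dist m m' ≤ (dist p p' + dist q q') / 2 := by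
  obtain ⟨n, hnp, hnq'⟩ := hX.1.exists_midpoint p q'
  have hmn : dist m n ≤ dist q q' / 2 :=
    hX.dist_midpoint_midpoint_le_of_left_eq hmp hmq hnp hnq'
  rw [dist_comm p q'] at hnp hnq'
  rw [dist_comm p' q'] at hm'p' hm'q'
  have hnm' : dist n m' ≤ dist p p' / 2 :=
    hX.dist_midpoint_midpoint_le_of_left_eq hnq' hnp hm'q' hm'p'
  linarith [dist_triangle m n m']

lemma metricMidpointConvex_dist_apply_self (hX : IsCAT0 X) {φ : X → X} (hφ : Isometry φ) :
    MetricMidpointConvex fun x => dist (φ x) x := by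
  intro x y m hmx hmy
  have hφmx : dist (φ m) (φ x) = dist (φ x) (φ y) / 2 := by rw [hφ.dist_eq, hφ.dist_eq, hmx]
  have hφmy : dist (φ m) (φ y) = dist (φ x) (φ y) / 2 := by rw [hφ.dist_eq, hφ.dist_eq, hmy]
  exact hX.dist_midpoint_midpoint_le hφmx hφmy hmx hmy

end IsCAT0

namespace MetricMidpointConvex

variable {f : X → ℝ}

lemma csSup_image {ι : Type*} {F : ι → X → ℝ} {Q : Set ι}
    (hF : ∀ i ∈ Q, MetricMidpointConvex (F i)) (hbdd : ∀ x, BddAbove ((fun i => F i x) '' Q)) :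
    MetricMidpointConvex fun x => sSup ((fun i => F i x) '' Q) := by
  intro x y m hmx hmy
  rcases Q.eq_empty_or_nonempty with rfl | hQ
  · simp
  refine csSup_le (hQ.image _) ?_
  rintro _ ⟨i, hi, rfl⟩
  have hx := le_csSup (hbdd x) (mem_image_of_mem (fun i => F i x) hi)
  have hy := le_csSup (hbdd y) (mem_image_of_mem (fun i => F i y) hi)
  linarith [hF i hi x y m hmx hmy]

lemma le_dyadic_of_isGeodesicOn (hf : MetricMidpointConvex f) {σ : ℝ → X} {L : ℝ}
    (hσ : IsGeodesicOn σ 0 L) (hL : 0 ≤ L) (k : ℕ) :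
    f (σ (L / 2 ^ k)) ≤ f (σ 0) + (f (σ L) - f (σ 0)) / 2 ^ k := by
  induction k with
  | zero => simp
  | succ k ih =>
    have h0 : (0 : ℝ) ∈ Icc 0 L := ⟨le_rfl, hL⟩
    have hk : L / 2 ^ k ∈ Icc 0 L := ⟨by positivity, div_le_self hL (one_le_pow₀ one_le_two)⟩
    have hmid := hf _ _ _ (hσ.dist_midpoint_left h0 hk) (hσ.dist_midpoint_right h0 hk)
    rw [show (0 + L / 2 ^ k) / 2 = L / 2 ^ (k + 1) by ring] at hmid
    calc f (σ (L / 2 ^ (k + 1))) ≤ (f (σ 0) + f (σ (L / 2 ^ k))) / 2 := hmid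
      _ ≤ (f (σ 0) + (f (σ 0) + (f (σ L) - f (σ 0)) / 2 ^ k)) / 2 := by linarith
      _ = f (σ 0) + (f (σ L) - f (σ 0)) / 2 ^ (k + 1) := by ring

lemma exists_le_of_le_dist (hX : IsGeodesicSpace X) (hf : MetricMidpointConvex f) {x₀ x : X}
    (h₀ : 0 ≤ f x₀) (hx : 0 ≤ f x) {r : ℝ} (hr : 0 < r) (hrx : r ≤ dist x₀ x) :
    ∃ y, r ≤ dist y x₀ ∧ f y ≤ f x₀ + 2 * r / dist x₀ x * f x := by
  obtain ⟨σ, hσ, hσ0, hσL⟩ := hX x₀ x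
  set L := dist x₀ x
  have hL : 0 < L := hr.trans_le hrx
  obtain ⟨k, hk, hk'⟩ := exists_nat_pow_near ((one_le_div hr).2 hrx) one_lt_two
  have h2k : (0 : ℝ) < 2 ^ k := by positivity
  have hk_mem : L / 2 ^ k ∈ Icc 0 L := ⟨by positivity, div_le_self hL.le (one_le_pow₀ one_le_two)⟩
  refine ⟨σ (L / 2 ^ k), ?_, ?_⟩
  · rw [← hσ0, hσ _ hk_mem 0 ⟨le_rfl, hL.le⟩, sub_zero, abs_of_nonneg hk_mem.1, le_div_iff₀ h2k]
    rwa [le_div_iff₀ hr, mul_comm] at hk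
  · have hdy := hf.le_dyadic_of_isGeodesicOn hσ hL.le k
    rw [hσ0, hσL] at hdy
    have hscale : 1 / 2 ^ k ≤ 2 * r / L := by
      rw [div_lt_iff₀ hr, pow_succ] at hk'
      rw [div_le_div_iff₀ h2k hL]
      linarith
    calc f (σ (L / 2 ^ k)) ≤ f x₀ + (f x - f x₀) / 2 ^ k := hdy
      _ ≤ f x₀ + 1 / 2 ^ k * f x := by
        rw [one_div_mul_eq_div]; gcongr; linarith
      _ ≤ f x₀ + 2 * r / L * f x := by gcongr

lemma linear_lower_bound_of_sublevel_subset_ball (hX : IsGeodesicSpace X)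
    (hf : MetricMidpointConvex f) (hf₀ : ∀ x, 0 ≤ f x) {x₀ : X} {r : ℝ}
    (hr : {y | f y ≤ f x₀ + 1} ⊆ ball x₀ r) (x : X) :
    (2 * r)⁻¹ * dist x x₀ - 1 ≤ f x := by
  have hr₀ : 0 < r := by simpa using hr (show f x₀ ≤ f x₀ + 1 by linarith)
  rw [dist_comm]
  rcases lt_or_ge (dist x₀ x) r with hxr | hrx
  · have : (2 * r)⁻¹ * dist x₀ x ≤ 1 := by
      rw [← div_eq_inv_mul, div_le_one (by positivity)]; linarith
    linarith [hf₀ x]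
  obtain ⟨y, hry, hy⟩ := hf.exists_le_of_le_dist hX (hf₀ x₀) (hf₀ x) hr₀ hrx
  have hy_far : f x₀ + 1 < f y := by
    by_contra! hy'
    exact (mem_ball.1 (hr hy')).not_ge hry
  have hL : 0 < dist x₀ x := hr₀.trans_le hrx
  have hgrow : 1 < 2 * r * f x / dist x₀ x := by
    rw [← div_mul_eq_mul_div]; linarith [hy_far.trans_le hy]
  rw [one_lt_div hL, ← div_lt_iff₀' (by positivity), div_eq_inv_mul] at hgrow
  linarith

end MetricMidpointConvex

lemma isBounded_sublevel_of_linear_lower_bound {f : X → ℝ} {x₀ : X} {lam d₀ : ℝ} (hlam : 0 < lam)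
    (hf : ∀ x, lam * dist x x₀ - d₀ ≤ f x) (C : ℝ) : Bornology.IsBounded {x | f x ≤ C} := by
  refine (isBounded_closedBall (x := x₀) (r := (C + d₀) / lam)).subset fun x hx => ?_
  rw [mem_closedBall, le_div_iff₀ hlam]
  linarith [hf x, show f x ≤ C from hx]

lemma Isometry.dist_apply_self_le {φ : X → X} (hφ : Isometry φ) (x y : X) :
    dist (φ x) x ≤ dist (φ y) y + 2 * dist x y := by
  linarith [dist_triangle4 (φ x) (φ y) y x, hφ.dist_eq x y, dist_comm x y]

lemma bddAbove_dist_apply_self_image {ι : Type*} {φ : ι → X → X} (hφ : ∀ i, Isometry (φ i))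
    {Q : Set ι} {x₀ : X} (h : BddAbove ((fun i => dist (φ i x₀) x₀) '' Q)) (x : X) :
    BddAbove ((fun i => dist (φ i x) x) '' Q) := by
  obtain ⟨C, hC⟩ := h
  refine ⟨C + 2 * dist x x₀, ?_⟩
  rintro _ ⟨i, hi, rfl⟩
  linarith [hC (mem_image_of_mem _ hi), (hφ i).dist_apply_self_le x x₀]

end

theorem no_unbounded_Qevanescent_iff_linear_growth_general
    {G : Type*} [Group G] [TopologicalSpace G]
    {X : Type*} [MetricSpace X] (hX : IsCAT0 X)
    (ρ : G → X → X) (hact : IsIsometricAction ρ)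
    (hcont : Continuous fun p : G × X => ρ p.1 p.2)
    (Q : Set G) (hQ : IsCompact Q) (x₀ : X) :
    (¬ ∃ T : Set X, ¬ Bornology.IsBounded T ∧ QEvanescent ρ Q T) ↔
      ∃ lam : ℝ, 0 < lam ∧ ∃ d₀ : ℝ, 0 ≤ d₀ ∧
        ∀ x : X, lam * dist x x₀ - d₀ ≤ sSup ((fun g => dist (ρ g x) x) '' Q) := by
  set f : X → ℝ := fun x => sSup ((fun g => dist (ρ g x) x) '' Q)
  have hbdd : ∀ x, BddAbove ((fun g => dist (ρ g x) x) '' Q) :=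
    bddAbove_dist_apply_self_image hact.2.2 <| hQ.bddAbove_image
      ((hcont.comp (Continuous.prodMk_left x₀)).dist continuous_const).continuousOn
  have hle : ∀ x, ∀ g ∈ Q, dist (ρ g x) x ≤ f x := fun x g hg =>
    le_csSup (hbdd x) (mem_image_of_mem _ hg)
  have hf₀ : ∀ x, 0 ≤ f x := fun x => Real.sSup_nonneg <| by
    rintro _ ⟨g, -, rfl⟩; exact dist_nonneg
  have hconv : MetricMidpointConvex f :=
    .csSup_image (fun g _ => hX.metricMidpointConvex_dist_apply_self (hact.2.2 g)) hbdd
  constructor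
  · intro hnone
    have hbounded : Bornology.IsBounded {y | f y ≤ f x₀ + 1} := by
      by_contra hunb
      exact hnone ⟨_, hunb, f x₀ + 1, fun g hg y hy => (hle y g hg).trans hy⟩
    obtain ⟨r, hr⟩ := (isBounded_iff_subset_ball x₀).1 hbounded
    have hr₀ : 0 < r := by simpa using hr (show f x₀ ≤ f x₀ + 1 by linarith)
    exact ⟨(2 * r)⁻¹, by positivity, 1, zero_le_one,
      hconv.linear_lower_bound_of_sublevel_subset_ball hX.1 hf₀ hr⟩
  · rintro ⟨lam, hlam, d₀, -, hgrow⟩ ⟨T, hT, C, hC⟩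
    refine hT ((isBounded_sublevel_of_linear_lower_bound hlam hgrow (max C 0)).subset ?_)
    intro x hx
    refine Real.sSup_le ?_ (le_max_right _ _)
    rintro _ ⟨g, hg, rfl⟩
    exact (hC g hg x hx).trans (le_max_left _ _)

/-- Monod, Lemma on linear growth of displacement: for a continuous isometric action of a
topological group `G` on a CAT(0) space `X`, a compact `Q ⊆ G` and a basepoint `x₀`, there
is no unbounded `Q`-evanescent set if and only if the displacement over `Q` grows at least
linearly in the distance to `x₀`. -/
theorem no_unbounded_Qevanescent_iff_linear_growth
    {G : Type*} [Group G] [TopologicalSpace G] [IsTopologicalGroup G]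
    {X : Type*} [MetricSpace X] (hX : IsCAT0 X)
    (ρ : G → X → X) (hact : IsIsometricAction ρ)
    (hcont : Continuous fun p : G × X => ρ p.1 p.2)
    (Q : Set G) (hQ : IsCompact Q) (x₀ : X) :
    (¬ ∃ T : Set X, ¬ Bornology.IsBounded T ∧ QEvanescent ρ Q T) ↔
      ∃ lam : ℝ, 0 < lam ∧ ∃ d₀ : ℝ, 0 ≤ d₀ ∧
        ∀ x : X, lam * dist x x₀ - d₀ ≤ sSup ((fun g => dist (ρ g x) x) '' Q) :=
  no_unbounded_Qevanescent_iff_linear_growth_general hX ρ hact hcont Q hQ x₀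
end

section
/- Let G be a topological group acting continuously by isometries on a complete CAT(0) space X. (i) If there exists a geodesic ray c : [0,∞) → X such that for every g ∈ G the function t ↦ d(g·c(t), c(t)) is bounded (i.e. G fixes the point at infinity determined by c), then the G-action on X is evanescent. (ii) Conversely, if X is proper (closed balls are compact) and the G-action is evanescent, then such a geodesic ray exists. -/
/-! In a CAT(0) space, comparing the midpoints of `[x, y]` and `[φ x, φ y]` shows that the
displacement `t ↦ d(φ (σ t), σ t)` of an isometry `φ` along a geodesic `σ` is midpoint convex.

If every `g` has bounded displacement along a ray `c`, convexity forces the displacement to be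
largest at `c 0`, and `g ↦ d(g (c 0), c 0)` is bounded on compact sets: the ray itself is an
unbounded set witnessing evanescence.

Conversely, join a base point `x₀` to points `xₙ` of an unbounded evanescent set with
`d(x₀, xₙ) → ∞`. By convexity, the displacement of `g` on every segment `[x₀, xₙ]` is at most
`max (d(g x₀, x₀)) C_g`; in a proper space the segments subconverge to a ray, which inherits
this bound. -/

open Set Filter Topology Metric

theorem Icc_subset_of_isClosed_of_midpoint_mem {S : Set ℝ} {a b : ℝ} (hS : IsClosed S)
    (ha : a ∈ S) (hb : b ∈ S) (hmid : ∀ s ∈ S, ∀ t ∈ S, (s + t) / 2 ∈ S) : Icc a b ⊆ S := by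
  intro t ht
  by_contra htS
  -- The points `u`, `v` of `S` nearest to `t` on either side have their midpoint between them.
  set L := S ∩ Icc a t
  set R := S ∩ Icc t b
  set u := sSup L
  set v := sInf R
  have hL : BddAbove L := ⟨t, fun x hx => hx.2.2⟩
  have hR : BddBelow R := ⟨t, fun x hx => hx.2.1⟩
  have huL : u ∈ L := (hS.inter isClosed_Icc).csSup_mem ⟨a, ha, le_rfl, ht.1⟩ hL
  have hvR : v ∈ R := (hS.inter isClosed_Icc).csInf_mem ⟨b, hb, ht.2, le_rfl⟩ hR
  have hut : u < t := lt_of_le_of_ne huL.2.2 fun h => htS (h ▸ huL.1)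
  have htv : t < v := lt_of_le_of_ne hvR.2.1 fun h => htS (h ▸ hvR.1)
  have hm : (u + v) / 2 ∈ S := hmid _ huL.1 _ hvR.1
  rcases le_total ((u + v) / 2) t with hmt | htm
  · have := le_csSup hL ⟨hm, by linarith [huL.2.1], hmt⟩
    linarith
  · have := csInf_le hR ⟨hm, htm, by linarith [hvR.2.2]⟩
    linarith

theorem apply_le_apply_zero_of_bounded_of_two_mul_le {f : ℝ → ℝ} {C : ℝ}
    (hC : ∀ t, 0 ≤ t → f t ≤ C) (hmid : ∀ s, 0 ≤ s → 2 * f s ≤ f 0 + f (2 * s))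
    {t : ℝ} (ht : 0 ≤ t) : f t ≤ f 0 := by
  have hpow : ∀ n : ℕ, 2 ^ n * (f t - f 0) ≤ f (2 ^ n * t) - f 0 := by
    intro n
    induction n with
    | zero => simp
    | succ n ih =>
      have h := hmid (2 ^ n * t) (by positivity)
      rw [pow_succ', mul_assoc, mul_assoc]
      linarith
  by_contra! h
  obtain ⟨n, hn⟩ := pow_unbounded_of_one_lt ((C - f 0) / (f t - f 0)) one_lt_two
  rw [div_lt_iff₀ (sub_pos.2 h)] at hn
  linarith [hpow n, hC _ (by positivity : 0 ≤ 2 ^ n * t)]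

section MetricSpace

variable {X : Type*} [MetricSpace X]

def IsMetricMidpoint (m x y : X) : Prop :=
  dist m x = dist x y / 2 ∧ dist m y = dist x y / 2

def IsGeodesicRay (c : ℝ → X) : Prop :=
  ∀ s ∈ Ici (0 : ℝ), ∀ t ∈ Ici (0 : ℝ), dist (c s) (c t) = |s - t|

theorem IsMetricMidpoint.map {m x y : X} (h : IsMetricMidpoint m x y) {φ : X → X}
    (hφ : Isometry φ) : IsMetricMidpoint (φ m) (φ x) (φ y) := by
  simpa only [IsMetricMidpoint, hφ.dist_eq] using h

theorem IsGeodesicOn.continuousOn {σ : ℝ → X} {a b : ℝ} (hσ : IsGeodesicOn σ a b) :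
    ContinuousOn σ (Icc a b) :=
  (LipschitzOnWith.mk_one fun s hs t ht => (hσ s hs t ht).le).continuousOn

theorem IsGeodesicOn.isMetricMidpoint {σ : ℝ → X} {a b s t : ℝ} (hσ : IsGeodesicOn σ a b)
    (hs : s ∈ Icc a b) (ht : t ∈ Icc a b) :
    IsMetricMidpoint (σ ((s + t) / 2)) (σ s) (σ t) := by
  have hm : (s + t) / 2 ∈ Icc a b := ⟨by linarith [hs.1, ht.1], by linarith [hs.2, ht.2]⟩
  rw [IsMetricMidpoint, hσ _ hm _ hs, hσ _ hm _ ht, hσ _ hs _ ht,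
    show (s + t) / 2 - s = -((s - t) / 2) by ring, show (s + t) / 2 - t = (s - t) / 2 by ring,
    abs_neg, abs_div, abs_two]
  exact ⟨rfl, rfl⟩

theorem IsGeodesicRay.isGeodesicOn {c : ℝ → X} (hc : IsGeodesicRay c) (b : ℝ) :
    IsGeodesicOn c 0 b :=
  fun s hs t ht => hc s hs.1 t ht.1

theorem not_isBounded_image_of_isGeodesicRay {c : ℝ → X} (hc : IsGeodesicRay c) :
    ¬ Bornology.IsBounded (c '' Ici 0) := by
  rw [isBounded_iff_subset_closedBall (c 0)]
  rintro ⟨r, hr⟩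
  have hmem := hr ⟨max r 0 + 1, mem_Ici.2 (by positivity), rfl⟩
  rw [mem_closedBall, hc _ (mem_Ici.2 (by positivity)) 0 (mem_Ici.2 le_rfl), sub_zero,
    abs_of_pos (by positivity)] at hmem
  linarith [le_max_left r 0]

theorem IsGeodesicSpace.exists_isMetricMidpoint (hX : IsGeodesicSpace X) (x y : X) :
    ∃ m, IsMetricMidpoint m x y := by
  obtain ⟨σ, hσ, hσx, hσy⟩ := hX x y
  have h := hσ.isMetricMidpoint (left_mem_Icc.2 dist_nonneg) (right_mem_Icc.2 dist_nonneg)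
  rw [hσx, hσy] at h
  exact ⟨_, h⟩

namespace IsCAT0

theorem dist_isMetricMidpoint_le (hX : IsCAT0 X) {p q r m n : X}
    (hm : IsMetricMidpoint m p q) (hn : IsMetricMidpoint n q r) : dist m n ≤ dist p r / 2 := by
  have h₁ := hX.2 m q r n hn.1 hn.2
  have h₂ := hX.2 r p q m hm.1 hm.2
  rw [dist_comm n m, dist_comm r m, dist_comm q m, hm.2, dist_comm r q] at h₁
  rw [dist_comm q p] at h₂
  have hsq : dist m n ^ 2 ≤ (dist p r / 2) ^ 2 := by linarith
  exact (pow_le_pow_iff_left₀ dist_nonneg (by positivity) two_ne_zero).1 hsq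

theorem dist_isMetricMidpoint_isMetricMidpoint_le (hX : IsCAT0 X) {x y x' y' m m' : X}
    (hm : IsMetricMidpoint m x y) (hm' : IsMetricMidpoint m' x' y') :
    dist m m' ≤ (dist x x' + dist y y') / 2 := by
  -- Compare both midpoints with a midpoint `n` of the diagonal `y x'`.
  obtain ⟨n, hn⟩ := hX.1.exists_isMetricMidpoint y x'
  calc dist m m' ≤ dist m n + dist n m' := dist_triangle m n m'
    _ ≤ dist x x' / 2 + dist y y' / 2 :=
      add_le_add (hX.dist_isMetricMidpoint_le hm hn) (hX.dist_isMetricMidpoint_le hn hm')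
    _ = (dist x x' + dist y y') / 2 := by ring

theorem dist_map_isMetricMidpoint_le (hX : IsCAT0 X) {φ : X → X} (hφ : Isometry φ) {m x y : X}
    (hm : IsMetricMidpoint m x y) :
    dist (φ m) m ≤ (dist (φ x) x + dist (φ y) y) / 2 := by
  simpa only [dist_comm (φ _)] using
    hX.dist_isMetricMidpoint_isMetricMidpoint_le hm (hm.map hφ)

theorem dist_map_le_max_of_isGeodesicOn (hX : IsCAT0 X) {φ : X → X} (hφ : Isometry φ)
    {σ : ℝ → X} {a b t : ℝ} (hσ : IsGeodesicOn σ a b) (ht : t ∈ Icc a b) :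
    dist (φ (σ t)) (σ t) ≤ max (dist (φ (σ a)) (σ a)) (dist (φ (σ b)) (σ b)) := by
  set f : ℝ → ℝ := fun t => dist (φ (σ t)) (σ t)
  have hf : ContinuousOn f (Icc a b) :=
    continuous_dist.comp_continuousOn
      ((hφ.continuous.comp_continuousOn hσ.continuousOn).prodMk hσ.continuousOn)
  have hab : a ≤ b := ht.1.trans ht.2
  refine (Icc_subset_of_isClosed_of_midpoint_mem (S := Icc a b ∩ f ⁻¹' Iic _)
    (hf.preimage_isClosed_of_isClosed isClosed_Icc isClosed_Iic)
    ⟨left_mem_Icc.2 hab, le_max_left (f a) (f b)⟩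
    ⟨right_mem_Icc.2 hab, le_max_right (f a) (f b)⟩ ?_ ht).2
  rintro s ⟨hs, hfs⟩ t ⟨ht, hft⟩
  refine ⟨⟨by linarith [hs.1, ht.1], by linarith [hs.2, ht.2]⟩, ?_⟩
  have := hX.dist_map_isMetricMidpoint_le hφ (hσ.isMetricMidpoint hs ht)
  simp only [mem_preimage, mem_Iic] at hfs hft ⊢
  linarith

theorem dist_map_le_of_isGeodesicRay (hX : IsCAT0 X) {φ : X → X} (hφ : Isometry φ)
    {c : ℝ → X} (hc : IsGeodesicRay c) {C : ℝ} (hC : ∀ t, 0 ≤ t → dist (φ (c t)) (c t) ≤ C)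
    {t : ℝ} (ht : 0 ≤ t) : dist (φ (c t)) (c t) ≤ dist (φ (c 0)) (c 0) := by
  refine apply_le_apply_zero_of_bounded_of_two_mul_le hC (fun s hs => ?_) ht
  have hmid := (hc.isGeodesicOn (2 * s)).isMetricMidpoint (left_mem_Icc.2 (by positivity))
    (right_mem_Icc.2 (by positivity))
  rw [show (0 + 2 * s) / 2 = s by ring] at hmid
  linarith [hX.dist_map_isMetricMidpoint_le hφ hmid]

end IsCAT0

theorem exists_isGeodesicRay_mapClusterPt [ProperSpace X] {x₀ : X} {σ : ℕ → ℝ → X}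
    {b : ℕ → ℝ} (hb : Tendsto b atTop atTop) (hσ : ∀ n, IsGeodesicOn (σ n) 0 (b n))
    (hσ₀ : ∀ n, σ n 0 = x₀) :
    ∃ c : ℝ → X, IsGeodesicRay c ∧ ∀ t, 0 ≤ t → MapClusterPt (c t) atTop fun n => σ n t := by
  -- Limits along one ultrafilter make all the distances `dist (c s) (c t)` limits as well.
  let u : Ultrafilter ℕ := .of atTop
  have hu : (u : Filter ℕ) ≤ atTop := Ultrafilter.of_le atTop
  have hball : ∀ t, 0 ≤ t → ∀ᶠ n in atTop, σ n t ∈ closedBall x₀ t := fun t ht => by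
    filter_upwards [hb.eventually_ge_atTop t] with n hn
    rw [mem_closedBall, ← hσ₀ n, hσ n t ⟨ht, hn⟩ 0 ⟨le_rfl, ht.trans hn⟩, sub_zero,
      abs_of_nonneg ht]
  have hlim : ∀ t, ∃ z, 0 ≤ t → Tendsto (fun n => σ n t) u (𝓝 z) := by
    intro t
    by_cases ht : 0 ≤ t
    · obtain ⟨z, -, hz⟩ := (isCompact_closedBall x₀ t).ultrafilter_le_nhds
        (u.map fun n => σ n t) (le_principal_iff.2 (hu (hball t ht)))
      exact ⟨z, fun _ => hz⟩
    · exact ⟨x₀, fun h => absurd h ht⟩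
  choose c hc using hlim
  refine ⟨c, fun s hs t ht => ?_, fun t ht => (hc t ht).mapClusterPt.mono hu⟩
  have heq : ∀ᶠ n in (u : Filter ℕ), |s - t| = dist (σ n s) (σ n t) := hu <| by
    filter_upwards [hb.eventually_ge_atTop s, hb.eventually_ge_atTop t] with n hns hnt
    exact (hσ n s ⟨hs, hns⟩ t ⟨ht, hnt⟩).symm
  exact tendsto_nhds_unique ((hc s hs).dist (hc t ht)) (tendsto_const_nhds.congr' heq)

section Action

variable {G : Type*} [TopologicalSpace G] {ρ : G → X → X}

theorem evanescent_of_isGeodesicRay (hX : IsCAT0 X) (hρ : ∀ g, Isometry (ρ g))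
    (hcont : Continuous fun p : G × X => ρ p.1 p.2) {c : ℝ → X} (hc : IsGeodesicRay c)
    (hbd : ∀ g : G, ∃ C : ℝ, ∀ t : ℝ, 0 ≤ t → dist (ρ g (c t)) (c t) ≤ C) : Evanescent ρ := by
  refine ⟨c '' Ici 0, not_isBounded_image_of_isGeodesicRay hc, fun Q hQ => ?_⟩
  have hcont₀ : Continuous fun g : G => dist (ρ g (c 0)) (c 0) :=
    (hcont.comp (continuous_id.prodMk continuous_const)).dist continuous_const
  obtain ⟨K, hK⟩ := hQ.bddAbove_image hcont₀.continuousOn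
  refine ⟨K, fun g hg x ⟨t, ht, hx⟩ => hx ▸ ?_⟩
  obtain ⟨C, hC⟩ := hbd g
  exact (hX.dist_map_le_of_isGeodesicRay (hρ g) hc hC ht).trans (hK ⟨g, hg, rfl⟩)

theorem exists_isGeodesicRay_of_evanescent [ProperSpace X] (hX : IsCAT0 X)
    (hρ : ∀ g, Isometry (ρ g)) (hev : Evanescent ρ) :
    ∃ c : ℝ → X, IsGeodesicRay c ∧
      ∀ g : G, ∃ C : ℝ, ∀ t : ℝ, 0 ≤ t → dist (ρ g (c t)) (c t) ≤ C := by
  obtain ⟨T, hT, hTev⟩ := hev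
  obtain ⟨x₀, -⟩ := Bornology.nonempty_of_not_isBounded hT
  have hfar : ∀ n : ℕ, ∃ x ∈ T, (n : ℝ) ≤ dist x₀ x := fun n => by
    by_contra! h
    exact hT ((isBounded_iff_subset_closedBall x₀).2
      ⟨n, fun x hx => mem_closedBall'.2 (h x hx).le⟩)
  choose x hxT hx using hfar
  choose σ hσ hσ₀ hσx using fun n => hX.1 x₀ (x n)
  have hb : Tendsto (fun n => dist x₀ (x n)) atTop atTop :=
    tendsto_atTop_mono hx tendsto_natCast_atTop_atTop
  obtain ⟨c, hc, hcσ⟩ := exists_isGeodesicRay_mapClusterPt hb hσ hσ₀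
  refine ⟨c, hc, fun g => ?_⟩
  obtain ⟨C, hC⟩ := hTev {g} isCompact_singleton
  refine ⟨max (dist (ρ g x₀) x₀) C, fun t ht => ?_⟩
  have hclosed : IsClosed {y | dist (ρ g y) y ≤ max (dist (ρ g x₀) x₀) C} :=
    isClosed_le ((hρ g).continuous.dist continuous_id) continuous_const
  refine hclosed.mem_of_mapClusterPt (hcσ t ht) ?_
  filter_upwards [hb.eventually_ge_atTop t] with n hn
  have := hX.dist_map_le_max_of_isGeodesicOn (hρ g) (hσ n) ⟨ht, hn⟩
  rw [hσ₀, hσx] at this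
  exact this.trans (max_le_max le_rfl (hC g rfl _ (hxT n)))

end Action

end MetricSpace

theorem evanescent_iff_fixed_ray_general
    {G : Type*} [Group G] [TopologicalSpace G]
    {X : Type*} [MetricSpace X] (hX : IsCAT0 X)
    (ρ : G → X → X) (hact : IsIsometricAction ρ)
    (hcont : Continuous fun p : G × X => ρ p.1 p.2) :
    ((∃ c : ℝ → X, (∀ s ∈ Set.Ici (0:ℝ), ∀ t ∈ Set.Ici (0:ℝ), dist (c s) (c t) = |s - t|) ∧
        ∀ g : G, ∃ C : ℝ, ∀ t : ℝ, 0 ≤ t → dist (ρ g (c t)) (c t) ≤ C) →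
      Evanescent ρ) ∧
    (ProperSpace X → Evanescent ρ →
      ∃ c : ℝ → X, (∀ s ∈ Set.Ici (0:ℝ), ∀ t ∈ Set.Ici (0:ℝ), dist (c s) (c t) = |s - t|) ∧
        ∀ g : G, ∃ C : ℝ, ∀ t : ℝ, 0 ≤ t → dist (ρ g (c t)) (c t) ≤ C) :=
  ⟨fun ⟨_, hc, hbd⟩ => evanescent_of_isGeodesicRay hX hact.2.2 hcont hc hbd,
    fun _ hev => exists_isGeodesicRay_of_evanescent hX hact.2.2 hev⟩

/-- Monod, Proposition: (i) if a continuous isometric action of a topological group `G` on a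
complete CAT(0) space `X` fixes a point at infinity (i.e. there is a geodesic ray along which
every `g ∈ G` has bounded displacement), then the action is evanescent; (ii) conversely, if `X`
is proper, an evanescent action admits such a geodesic ray. -/
theorem evanescent_iff_fixed_ray
    {G : Type*} [Group G] [TopologicalSpace G] [IsTopologicalGroup G]
    {X : Type*} [MetricSpace X] [CompleteSpace X] (hX : IsCAT0 X)
    (ρ : G → X → X) (hact : IsIsometricAction ρ)
    (hcont : Continuous fun p : G × X => ρ p.1 p.2) :
    ((∃ c : ℝ → X, (∀ s ∈ Set.Ici (0:ℝ), ∀ t ∈ Set.Ici (0:ℝ), dist (c s) (c t) = |s - t|) ∧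
        ∀ g : G, ∃ C : ℝ, ∀ t : ℝ, 0 ≤ t → dist (ρ g (c t)) (c t) ≤ C) →
      Evanescent ρ) ∧
    (ProperSpace X → Evanescent ρ →
      ∃ c : ℝ → X, (∀ s ∈ Set.Ici (0:ℝ), ∀ t ∈ Set.Ici (0:ℝ), dist (c s) (c t) = |s - t|) ∧
        ∀ g : G, ∃ C : ℝ, ∀ t : ℝ, 0 ≤ t → dist (ρ g (c t)) (c t) ≤ C) :=
  evanescent_iff_fixed_ray_general hX ρ hact hcont
end
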